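/- For every integer n ≥ 1 and all real numbers p, q, r, x, t with (1+x)(x+t)(1+xt) ≠ 0, one has Σ_{σ∈S_n} p^{nest σ} q^{cros σ} (tq)^{exc σ} r^{fix σ} = ((1+xt)/(1+x))^{n} · Σ_{σ∈S_n} p^{nest σ} q^{cros σ} · ((1+x)² t/((x+t)(1+xt)))^{cpk σ} · (q(x+t)/(1+xt))^{exc σ} · ((1+x)r/(1+xt))^{fix σ}. -/

import Mathlib

open Finset

open scoped Classical

noncomputable section

namespace EulerExc

variable {n : ℕ}

/-- 1-based value of `σ` at position `k ∈ [1,n]`, with boundary convention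
`σ(0) = σ(n+1) = 0` outside. -/
def sv (σ : Equiv.Perm (Fin n)) (k : ℕ) : ℕ :=
  if h : 1 ≤ k ∧ k ≤ n then ((σ ⟨k - 1, by omega⟩ : Fin n) : ℕ) + 1 else 0

/-- 1-based value with boundary convention `σ(0) = 0`, `σ(n+1) = ∞`. -/
def svInf (σ : Equiv.Perm (Fin n)) (k : ℕ) : ℕ :=
  if k = 0 then 0 else if k ≤ n then sv σ k else n + 1

/-- number of excedances -/
def exc (σ : Equiv.Perm (Fin n)) : ℕ := (univ.filter fun i : Fin n => i < σ i).card

/-- number of fixed points -/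
def fixc (σ : Equiv.Perm (Fin n)) : ℕ := (univ.filter fun i : Fin n => σ i = i).card

/-- number of drops -/
def dropc (σ : Equiv.Perm (Fin n)) : ℕ := (univ.filter fun i : Fin n => σ i < i).card

/-- number of inversions -/
def inv (σ : Equiv.Perm (Fin n)) : ℕ :=
  (univ.filter fun p : Fin n × Fin n => p.1 < p.2 ∧ σ p.2 < σ p.1).card

/-- number of descents -/
def des (σ : Equiv.Perm (Fin n)) : ℕ :=
  ((Icc 1 (n - 1)).filter fun i => sv σ (i + 1) < sv σ i).card

/-- number of ascents -/
def asc (σ : Equiv.Perm (Fin n)) : ℕ :=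
  ((Icc 1 (n - 1)).filter fun i => sv σ i < sv σ (i + 1)).card

/-- crossing number: pairs `(i,j)` with `j < i < σ(j) < σ(i)` or `σ(i) < σ(j) ≤ i < j` -/
def cros (σ : Equiv.Perm (Fin n)) : ℕ :=
  (univ.filter fun p : Fin n × Fin n =>
    (p.2 < p.1 ∧ p.1 < σ p.2 ∧ σ p.2 < σ p.1) ∨
    (σ p.1 < σ p.2 ∧ σ p.2 ≤ p.1 ∧ p.1 < p.2)).card

/-- nesting number: pairs `(i,j)` with `j < i < σ(i) < σ(j)` or `σ(j) < σ(i) ≤ i < j` -/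
def nest (σ : Equiv.Perm (Fin n)) : ℕ :=
  (univ.filter fun p : Fin n × Fin n =>
    (p.2 < p.1 ∧ p.1 < σ p.1 ∧ σ p.1 < σ p.2) ∨
    (σ p.2 < σ p.1 ∧ σ p.1 ≤ p.1 ∧ p.1 < p.2)).card

def icr (σ : Equiv.Perm (Fin n)) : ℕ := cros σ⁻¹

/-- number of cyclic peaks -/
def cpk (σ : Equiv.Perm (Fin n)) : ℕ :=
  (univ.filter fun x : Fin n => σ⁻¹ x < x ∧ σ x < x).card

/-- number of cyclic valleys -/
def cval (σ : Equiv.Perm (Fin n)) : ℕ :=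
  (univ.filter fun x : Fin n => x < σ⁻¹ x ∧ x < σ x).card

/-- number of double excedances -/
def cda (σ : Equiv.Perm (Fin n)) : ℕ :=
  (univ.filter fun x : Fin n => σ⁻¹ x < x ∧ x < σ x).card

/-- number of double drops -/
def cdd (σ : Equiv.Perm (Fin n)) : ℕ :=
  (univ.filter fun x : Fin n => x < σ⁻¹ x ∧ σ x < x).card

/-- number of cycles (including fixed points) -/
def cyc (σ : Equiv.Perm (Fin n)) : ℕ := σ.cycleType.card + fixc σ

/-- the star companion `σ*` of `σ`: a permutation of `{0,1,…,n}` with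
`σ*(0) = n` and `σ*(i) = σ(i) - 1` for `i ∈ [n]`. -/
def star (σ : Equiv.Perm (Fin n)) : Equiv.Perm (Fin (n + 1)) :=
  (Equiv.Perm.decomposeFin.symm (0, σ)).trans (Equiv.subRight (1 : Fin (n + 1)))

def cpkStar (σ : Equiv.Perm (Fin n)) : ℕ :=
  (univ.filter fun i : Fin (n + 1) =>
    1 ≤ (i : ℕ) ∧ (i : ℕ) < n ∧ (star σ)⁻¹ i < i ∧ star σ i < i).card

def cdaStar (σ : Equiv.Perm (Fin n)) : ℕ :=
  (univ.filter fun i : Fin (n + 1) =>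
    1 ≤ (i : ℕ) ∧ (i : ℕ) < n ∧ (star σ)⁻¹ i < i ∧ i < star σ i).card

def cddStar (σ : Equiv.Perm (Fin n)) : ℕ :=
  (univ.filter fun i : Fin (n + 1) =>
    1 ≤ (i : ℕ) ∧ (i : ℕ) < n ∧ i < (star σ)⁻¹ i ∧ star σ i < i).card

def fixStar (σ : Equiv.Perm (Fin n)) : ℕ :=
  (univ.filter fun i : Fin (n + 1) =>
    1 ≤ (i : ℕ) ∧ (i : ℕ) < n ∧ star σ i = i).card

def cycStar (σ : Equiv.Perm (Fin n)) : ℕ := cyc (star σ)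

/-- number of occurrences of the vincular pattern 31-2 -/
def p31_2 (σ : Equiv.Perm (Fin n)) : ℕ :=
  ((Icc 1 n ×ˢ Icc 1 n).filter fun p =>
    p.1 + 1 < p.2 ∧ sv σ (p.1 + 1) < sv σ p.2 ∧ sv σ p.2 < sv σ p.1).card

/-- number of occurrences of the vincular pattern 2-13 -/
def p2_13 (σ : Equiv.Perm (Fin n)) : ℕ :=
  ((Icc 1 n ×ˢ Icc 1 n).filter fun p =>
    p.2 < p.1 ∧ p.1 < n ∧ sv σ p.1 < sv σ p.2 ∧ sv σ p.2 < sv σ (p.1 + 1)).card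

/-- number of occurrences of the vincular pattern 2-31 -/
def p2_31 (σ : Equiv.Perm (Fin n)) : ℕ :=
  ((Icc 1 n ×ˢ Icc 1 n).filter fun p =>
    p.2 < p.1 ∧ p.1 < n ∧ sv σ (p.1 + 1) < sv σ p.2 ∧ sv σ p.2 < sv σ p.1).card

/-- number of peaks (convention 0--0) -/
def pk (σ : Equiv.Perm (Fin n)) : ℕ :=
  ((Icc 1 n).filter fun i => sv σ (i - 1) < sv σ i ∧ sv σ (i + 1) < sv σ i).card

/-- number of valleys (convention 0--0) -/
def vall (σ : Equiv.Perm (Fin n)) : ℕ :=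
  ((Icc 1 n).filter fun i => sv σ i < sv σ (i - 1) ∧ sv σ i < sv σ (i + 1)).card

/-- number of double ascents (convention 0--0) -/
def da (σ : Equiv.Perm (Fin n)) : ℕ :=
  ((Icc 1 n).filter fun i => sv σ (i - 1) < sv σ i ∧ sv σ i < sv σ (i + 1)).card

/-- number of double descents (convention 0--0) -/
def dd (σ : Equiv.Perm (Fin n)) : ℕ :=
  ((Icc 1 n).filter fun i => sv σ i < sv σ (i - 1) ∧ sv σ (i + 1) < sv σ i).card

/-- number of peaks (convention 0--∞) -/
def lpk (σ : Equiv.Perm (Fin n)) : ℕ :=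
  ((Icc 1 n).filter fun i => svInf σ (i - 1) < svInf σ i ∧ svInf σ (i + 1) < svInf σ i).card

/-- number of valleys (convention 0--∞) -/
def lval (σ : Equiv.Perm (Fin n)) : ℕ :=
  ((Icc 1 n).filter fun i => svInf σ i < svInf σ (i - 1) ∧ svInf σ i < svInf σ (i + 1)).card

/-- number of double ascents (convention 0--∞) -/
def lda (σ : Equiv.Perm (Fin n)) : ℕ :=
  ((Icc 1 n).filter fun i => svInf σ (i - 1) < svInf σ i ∧ svInf σ i < svInf σ (i + 1)).card

/-- number of double descents (convention 0--∞) -/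
def ldd (σ : Equiv.Perm (Fin n)) : ℕ :=
  ((Icc 1 n).filter fun i => svInf σ i < svInf σ (i - 1) ∧ svInf σ (i + 1) < svInf σ i).card

/-- number of foremaxima: double ascents (convention 0--∞) that are
left-to-right maxima -/
def fmax (σ : Equiv.Perm (Fin n)) : ℕ :=
  ((Icc 1 n).filter fun i =>
    svInf σ (i - 1) < svInf σ i ∧ svInf σ i < svInf σ (i + 1) ∧
    ∀ j ∈ Icc 1 i, sv σ j ≤ sv σ i).card

/-- `scda σ = #{i ∈ [n-1] : i < σ(i) and i+1 > σ⁻¹(i+1)}` -/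
def scda (σ : Equiv.Perm (Fin n)) : ℕ :=
  ((Icc 1 (n - 1)).filter fun i => i < sv σ i ∧ sv σ⁻¹ (i + 1) < i + 1).card

/-- `σ` avoids the pattern 321 -/
def Avoids321 (σ : Equiv.Perm (Fin n)) : Prop :=
  ¬ ∃ i j k : Fin n, i < j ∧ j < k ∧ σ k < σ j ∧ σ j < σ i

/-- `σ` avoids the pattern 231 -/
def Avoids231 (σ : Equiv.Perm (Fin n)) : Prop :=
  ¬ ∃ i j k : Fin n, i < j ∧ j < k ∧ σ k < σ i ∧ σ i < σ j

/-- `σ` avoids the pattern 312 -/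
def Avoids312 (σ : Equiv.Perm (Fin n)) : Prop :=
  ¬ ∃ i j k : Fin n, i < j ∧ j < k ∧ σ j < σ k ∧ σ k < σ i

/-- `σ` avoids the pattern 213 -/
def Avoids213 (σ : Equiv.Perm (Fin n)) : Prop :=
  ¬ ∃ i j k : Fin n, i < j ∧ j < k ∧ σ j < σ i ∧ σ i < σ k

/-- `σ` avoids the pattern 132 -/
def Avoids132 (σ : Equiv.Perm (Fin n)) : Prop :=
  ¬ ∃ i j k : Fin n, i < j ∧ j < k ∧ σ i < σ k ∧ σ k < σ j

/-- `σ` is a derangement -/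
def IsDerangement (σ : Equiv.Perm (Fin n)) : Prop := ∀ i, σ i ≠ i

/-! Signed permutations `B_n`, encoded as a pair `(σ, ε)` of an ordinary
permutation (the absolute value) together with signs attached to positions. -/

/-- number of negative values -/
def negB (ε : Fin n → Bool) : ℕ := (univ.filter fun i => ε i = true).card

/-- number of type B excedances, w.r.t. the friends order -/
def excB (σ : Equiv.Perm (Fin n)) (ε : Fin n → Bool) : ℕ :=
  (univ.filter fun i : Fin n => i < σ i ∨ (σ i = i ∧ ε i = true)).card

/-- the (1-based, signed, integer) value of the signed permutation `(σ, ε)` at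
position `k ∈ [1,n]`, with `0` outside. -/
def signedVal (σ : Equiv.Perm (Fin n)) (ε : Fin n → Bool) (k : ℕ) : ℤ :=
  if h : 1 ≤ k ∧ k ≤ n then
    (if ε ⟨k - 1, by omega⟩ then -(((σ ⟨k - 1, by omega⟩ : Fin n) : ℕ) + 1 : ℤ)
     else (((σ ⟨k - 1, by omega⟩ : Fin n) : ℕ) + 1 : ℤ))
  else 0

/-- number of type B descents -/
def desB (σ : Equiv.Perm (Fin n)) (ε : Fin n → Bool) : ℕ :=
  ((range n).filter fun i => signedVal σ ε (i + 1) < signedVal σ ε i).card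

/-!
Split a permutation `σ` into its upper arcs `(i, σ i)` with `i < σ i` and its lower arcs
`(σ i, i)` with `σ i ≤ i`. Crossings and nestings of `σ` are those inside each half, and fixed
points are the loops of the lower half. Once the set `A` of excedance positions and the set `B`
of excedance values are fixed, the halves range independently over all matchings `A → B` and
`Bᶜ → Aᶜ`. Removing the arc at the smallest target shows that each weighted count is a product
over the targets `t` of `[h]_{p,q}`, or of `ρ p^h + q [h]_{p,q}` where `t` may be a fixed point;
here `h` is the number of arcs passing over `t`, i.e. the height at `t` of the Motzkin path with
up steps `A \ B` (cyclic valleys) and down steps `B \ A` (cyclic peaks). Summing over the double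
excedances `A ∩ B` leaves the factor `X [h] + ρ p^h + q [h]` on every level step. The
substitution of the theorem rescales `(X, Y, ρ)` so that `c X' · c Y' = X Y`,
`c X' + c q = X + q` and `c ρ' = ρ`, which multiplies every path weight by `c^n`.
-/

section PQInt

variable {R : Type*} [CommSemiring R] {α : Type*} [LinearOrder α]

-- `[k]_{p,q} = p ^ (k - 1) + p ^ (k - 2) * q + ⋯ + q ^ (k - 1)`
def pqInt (p q : R) : ℕ → R
  | 0 => 0
  | k + 1 => p ^ k + q * pqInt p q k

lemma sum_rank_insert_max (p q ρ : R) {U : Finset α} {m : α} (hm : ∀ u ∈ U, u < m) :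
    ∑ s ∈ insert m U, q ^ #((insert m U).filter (s < ·)) * p ^ #((insert m U).filter (· < s)) *
        ρ ^ (if s = m then 1 else 0) =
      ρ * p ^ #U + q * ∑ s ∈ U, q ^ #(U.filter (s < ·)) * p ^ #(U.filter (· < s)) := by
  have hmU : m ∉ U := fun h => lt_irrefl m (hm m h)
  rw [sum_insert hmU, mul_sum]
  congr 1
  · have habove : (insert m U).filter (m < ·) = ∅ := by
      rw [filter_insert, if_neg (lt_irrefl m), filter_false_of_mem fun u hu => (hm u hu).not_gt]
    have hbelow : (insert m U).filter (· < m) = U := by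
      rw [filter_insert, if_neg (lt_irrefl m), filter_true_of_mem hm]
    rw [habove, hbelow, if_pos rfl, card_empty]
    ring
  · refine sum_congr rfl fun s hs => ?_
    have hsm : s ≠ m := fun h => hmU (h ▸ hs)
    have habove : (insert m U).filter (s < ·) = insert m (U.filter (s < ·)) := by
      rw [filter_insert, if_pos (hm s hs)]
    have hbelow : (insert m U).filter (· < s) = U.filter (· < s) := by
      rw [filter_insert, if_neg (not_lt.2 (hm s hs).le)]
    rw [habove, hbelow, card_insert_of_notMem (fun h => hmU (mem_filter.1 h).1), if_neg hsm]
    ring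

lemma sum_rank_eq_pqInt (p q : R) (U : Finset α) :
    ∑ s ∈ U, q ^ #(U.filter (s < ·)) * p ^ #(U.filter (· < s)) = pqInt p q #U := by
  induction U using Finset.induction_on_max with
  | empty => simp [pqInt]
  | insert m U hm ih =>
    have h := sum_rank_insert_max p q 1 hm
    simp only [one_pow, mul_one, one_mul] at h
    rw [h, ih, card_insert_of_notMem fun h => lt_irrefl m (hm m h), pqInt]

end PQInt

lemma card_filter_insert_product {β : Type*} [DecidableEq β] (P : β × β → Prop) [DecidablePred P]
    {e : β} {M : Finset β} (he : e ∉ M) (hee : ¬ P (e, e)) :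
    #((insert e M ×ˢ insert e M).filter P) =
      #((M ×ˢ M).filter P) + #(M.filter fun b => P (e, b)) + #(M.filter fun a => P (a, e)) := by
  simp only [card_filter, sum_product, sum_insert he, if_neg hee, sum_add_distrib]
  ring

section ArcSystemDefs

variable {α : Type*} [LinearOrder α] {R : Type*} [CommSemiring R]

structure IsArcSystem (r : α → α → Prop) (S T : Finset α) (M : Finset (α × α)) : Prop where
  image_fst : M.image Prod.fst = S
  image_snd : M.image Prod.snd = T
  injOn_fst : Set.InjOn Prod.fst (M : Set (α × α))
  injOn_snd : Set.InjOn Prod.snd (M : Set (α × α))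
  rel : ∀ e ∈ M, r e.1 e.2

def arcSystems (r : α → α → Prop) (S T : Finset α) : Finset (Finset (α × α)) :=
  (S ×ˢ T).powerset.filter (IsArcSystem r S T)

-- The side condition `r a.2.1 a.1.2` (second source against first target) makes crossings
-- strict for `r = (· < ·)` and weak for `r = (· ≤ ·)`, as in the two halves of `cros`.
def crossings (r : α → α → Prop) (M : Finset (α × α)) : ℕ :=
  #((M ×ˢ M).filter fun a => a.1.1 < a.2.1 ∧ a.1.2 < a.2.2 ∧ r a.2.1 a.1.2)

def nestings (M : Finset (α × α)) : ℕ :=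
  #((M ×ˢ M).filter fun a => a.1.1 < a.2.1 ∧ a.2.2 < a.1.2)

def loops (M : Finset (α × α)) : ℕ := #(M.filter fun e => e.1 = e.2)

def arcWeight (r : α → α → Prop) (p q ρ : R) (M : Finset (α × α)) : R :=
  q ^ crossings r M * p ^ nestings M * ρ ^ loops M

-- For the sources `S` and targets `T` of an arc system: the number of arcs `(s, t')` with
-- `s < t ≤ t'`.
def height (S T : Finset α) (t : α) : ℕ := #(S.filter (· < t)) - #(T.filter (· < t))

def arcFactor (r : α → α → Prop) (p q ρ : R) (S : Finset α) (t : α) (k : ℕ) : R :=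
  if r t t ∧ t ∈ S then ρ * p ^ k + q * pqInt p q k else pqInt p q k

end ArcSystemDefs

section ArcSystems

variable {α : Type*} [LinearOrder α] {R : Type*} [CommSemiring R]
  {r : α → α → Prop} {S T : Finset α} {M : Finset (α × α)} {s t : α}

namespace IsArcSystem

lemma fst_mem (hM : IsArcSystem r S T M) {e : α × α} (he : e ∈ M) : e.1 ∈ S :=
  hM.image_fst ▸ mem_image_of_mem _ he

lemma snd_mem (hM : IsArcSystem r S T M) {e : α × α} (he : e ∈ M) : e.2 ∈ T :=
  hM.image_snd ▸ mem_image_of_mem _ he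

lemma card_filter_fst (hM : IsArcSystem r S T M) (Q : α → Prop) [DecidablePred Q] :
    #(M.filter fun e => Q e.1) = #(S.filter Q) := by
  rw [← hM.image_fst, filter_image,
    card_image_of_injOn (hM.injOn_fst.mono (coe_subset.2 (filter_subset _ _)))]

lemma card_eq (hM : IsArcSystem r S T M) : #S = #T := by
  rw [← hM.image_fst, ← hM.image_snd, card_image_of_injOn hM.injOn_fst,
    card_image_of_injOn hM.injOn_snd]

lemma insert (hM : IsArcSystem r S T M) (hs : s ∉ S) (ht : t ∉ T) (hst : r s t) :
    IsArcSystem r (insert s S) (insert t T) (insert (s, t) M) where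
  image_fst := by rw [image_insert, hM.image_fst]
  image_snd := by rw [image_insert, hM.image_snd]
  injOn_fst := by
    rw [coe_insert, Set.injOn_insert fun h => hs (hM.image_fst ▸ mem_image_of_mem _ h)]
    exact ⟨hM.injOn_fst, fun h => hs (hM.image_fst ▸ by simpa using h)⟩
  injOn_snd := by
    rw [coe_insert, Set.injOn_insert fun h => ht (hM.image_snd ▸ mem_image_of_mem _ h)]
    exact ⟨hM.injOn_snd, fun h => ht (hM.image_snd ▸ by simpa using h)⟩
  rel := by
    simp only [mem_insert, forall_eq_or_imp]
    exact ⟨hst, hM.rel⟩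

lemma erase (hM : IsArcSystem r S T M) {e : α × α} (he : e ∈ M) :
    IsArcSystem r (S.erase e.1) (T.erase e.2) (M.erase e) where
  image_fst := by
    rw [← hM.image_fst, erase_eq, erase_eq, image_sdiff_of_injOn hM.injOn_fst
      (singleton_subset_iff.2 he), image_singleton]
  image_snd := by
    rw [← hM.image_snd, erase_eq, erase_eq, image_sdiff_of_injOn hM.injOn_snd
      (singleton_subset_iff.2 he), image_singleton]
  injOn_fst := hM.injOn_fst.mono (by simp)
  injOn_snd := hM.injOn_snd.mono (by simp)
  rel e' he' := hM.rel e' (mem_of_mem_erase he')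

lemma exists_mem_fst_eq (hM : IsArcSystem r S T M) (hs : s ∈ S) : ∃ e ∈ M, e.1 = s :=
  mem_image.1 (hM.image_fst ▸ hs)

lemma exists_mem_snd_eq (hM : IsArcSystem r S T M) (ht : t ∈ T) : ∃ e ∈ M, e.2 = t :=
  mem_image.1 (hM.image_snd ▸ ht)

end IsArcSystem

lemma mem_arcSystems : M ∈ arcSystems r S T ↔ IsArcSystem r S T M := by
  refine ⟨fun h => (mem_filter.1 h).2, fun h => mem_filter.2 ⟨mem_powerset.2 fun e he => ?_, h⟩⟩
  exact mem_product.2 ⟨h.fst_mem he, h.snd_mem he⟩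

lemma arcSystems_empty : arcSystems r (∅ : Finset α) ∅ = {∅} := by
  ext M
  simp only [mem_arcSystems, mem_singleton]
  refine ⟨fun h => image_eq_empty.1 h.image_fst, ?_⟩
  rintro rfl
  exact ⟨image_empty _, image_empty _, by simp, by simp, by simp⟩

lemma crossings_insert (hM : IsArcSystem r S T M) (hs : s ∉ S) (ht : ∀ t' ∈ T, t < t') :
    crossings r (insert (s, t) M) = crossings r M + #(S.filter fun s' => s < s' ∧ r s' t) := by
  have hsM : (s, t) ∉ M := fun h => hs (hM.fst_mem h)
  rw [crossings, card_filter_insert_product _ hsM (by simp), ← crossings, add_assoc]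
  congr 1
  have hout : M.filter (fun a => a.1 < s ∧ a.2 < t ∧ r s a.2) = ∅ :=
    filter_eq_empty_iff.2 fun a ha h => (ht a.2 (hM.snd_mem ha)).not_gt h.2.1
  rw [hout, card_empty, add_zero, ← hM.card_filter_fst]
  congr 1
  exact filter_congr fun a ha => by simp [ht a.2 (hM.snd_mem ha)]

lemma nestings_insert (hM : IsArcSystem r S T M) (hs : s ∉ S) (ht : ∀ t' ∈ T, t < t') :
    nestings (insert (s, t) M) = nestings M + #(S.filter (· < s)) := by
  have hsM : (s, t) ∉ M := fun h => hs (hM.fst_mem h)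
  rw [nestings, card_filter_insert_product _ hsM (by simp), ← nestings, add_assoc]
  congr 1
  have hout : M.filter (fun b => s < b.1 ∧ b.2 < t) = ∅ :=
    filter_eq_empty_iff.2 fun b hb h => (ht b.2 (hM.snd_mem hb)).not_gt h.2
  rw [hout, card_empty, zero_add, ← hM.card_filter_fst]
  congr 1
  exact filter_congr fun a ha => by simp [ht a.2 (hM.snd_mem ha)]

lemma loops_insert (hM : IsArcSystem r S T M) (hs : s ∉ S) :
    loops (insert (s, t) M) = loops M + if s = t then 1 else 0 := by
  have hsM : (s, t) ∉ M := fun h => hs (hM.fst_mem h)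
  rw [loops, filter_insert]
  split_ifs with h
  · rw [card_insert_of_notMem (fun h' => hsM (mem_filter.1 h').1), loops]
  · rfl

lemma arcWeight_insert (hM : IsArcSystem r S T M) (hs : s ∉ S) (ht : ∀ t' ∈ T, t < t')
    (p q ρ : R) :
    arcWeight r p q ρ (insert (s, t) M) =
      q ^ #(S.filter fun s' => s < s' ∧ r s' t) * p ^ #(S.filter (· < s)) *
        ρ ^ (if s = t then 1 else 0) * arcWeight r p q ρ M := by
  rw [arcWeight, arcWeight, crossings_insert hM hs ht, nestings_insert hM hs ht,
    loops_insert hM hs]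
  ring

lemma sum_arcSystems_eq_sum_sum_filter_mem {β : Type*} [AddCommMonoid β] (f : Finset (α × α) → β)
    {t : α} (ht : t ∈ T) :
    ∑ M ∈ arcSystems r S T, f M =
      ∑ s ∈ S.filter (r · t), ∑ M ∈ (arcSystems r S T).filter ((s, t) ∈ ·), f M := by
  rw [sum_comm' (t' := arcSystems r S T)
    (s' := fun M => (S.filter (r · t)).filter fun s => (s, t) ∈ M)
    (by intros; simp only [mem_filter]; tauto)]
  refine sum_congr rfl fun M hM => ?_
  have hM := mem_arcSystems.1 hM
  obtain ⟨e, he, rfl⟩ := hM.exists_mem_snd_eq ht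
  have hsrc : (S.filter (r · e.2)).filter (fun s => (s, e.2) ∈ M) = {e.1} := by
    ext s
    simp only [mem_filter, mem_singleton]
    refine ⟨fun h => (Prod.ext_iff.1 (hM.injOn_snd h.2 he rfl)).1, ?_⟩
    rintro rfl
    exact ⟨⟨hM.fst_mem he, hM.rel e he⟩, he⟩
  rw [hsrc, sum_singleton]

lemma sum_filter_mem_arcSystems_insert (p q ρ : R) {t₀ : α} (hs : s ∈ S) (hst₀ : r s t₀)
    (ht₀ : ∀ t ∈ T, t₀ < t) :
    ∑ M ∈ (arcSystems r S (insert t₀ T)).filter ((s, t₀) ∈ ·), arcWeight r p q ρ M =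
      q ^ #((S.erase s).filter fun s' => s < s' ∧ r s' t₀) * p ^ #((S.erase s).filter (· < s)) *
        ρ ^ (if s = t₀ then 1 else 0) * ∑ M ∈ arcSystems r (S.erase s) T, arcWeight r p q ρ M := by
  have ht₀T : t₀ ∉ T := fun h => lt_irrefl t₀ (ht₀ t₀ h)
  have hnot : ∀ M ∈ arcSystems r (S.erase s) T, (s, t₀) ∉ M := fun M hM h =>
    notMem_erase s S ((mem_arcSystems.1 hM).fst_mem h)
  rw [mul_sum]
  symm
  refine sum_nbij' (insert (s, t₀)) (·.erase (s, t₀)) (fun M hM => ?_) (fun M hM => ?_)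
    (fun M hM => erase_insert (hnot M hM)) (fun M hM => insert_erase (mem_filter.1 hM).2)
    (fun M hM => (arcWeight_insert (mem_arcSystems.1 hM) (notMem_erase s S) ht₀ p q ρ).symm)
  · have := (mem_arcSystems.1 hM).insert (notMem_erase s S) ht₀T hst₀
    rw [insert_erase hs] at this
    exact mem_filter.2 ⟨mem_arcSystems.2 this, mem_insert_self _ _⟩
  · obtain ⟨hM, he⟩ := mem_filter.1 hM
    have := (mem_arcSystems.1 hM).erase he
    rwa [erase_insert ht₀T, ← mem_arcSystems] at this

lemma height_union_union {V P : Finset α} (hV : Disjoint V T) (hP : Disjoint P T) (t : α) :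
    height (V ∪ T) (P ∪ T) t = height V P t := by
  rw [height, height, filter_union, filter_union, card_union_of_disjoint
    (disjoint_filter_filter hV), card_union_of_disjoint (disjoint_filter_filter hP)]
  omega

lemma sum_filter_rel_eq_arcFactor (hlt : ∀ a b, a < b → r a b) (hle : ∀ a b, r a b → a ≤ b)
    (p q ρ : R) (t₀ : α) :
    ∑ s ∈ S.filter (r · t₀), q ^ #((S.erase s).filter fun s' => s < s' ∧ r s' t₀) *
        p ^ #((S.erase s).filter (· < s)) * ρ ^ (if s = t₀ then 1 else 0) =
      arcFactor r p q ρ S t₀ #(S.filter (· < t₀)) := by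
  set U := S.filter (r · t₀)
  set L := S.filter (· < t₀)
  have hL : ∀ u ∈ L, u < t₀ := fun u hu => (mem_filter.1 hu).2
  have hrank : ∀ s ∈ U, q ^ #((S.erase s).filter fun s' => s < s' ∧ r s' t₀) *
      p ^ #((S.erase s).filter (· < s)) = q ^ #(U.filter (s < ·)) * p ^ #(U.filter (· < s)) := by
    intro s hs
    have hst := (mem_filter.1 hs).2
    congr 3 <;> ext s' <;> simp only [U, mem_filter, mem_erase]
    · exact ⟨fun h => ⟨⟨h.1.2, h.2.2⟩, h.2.1⟩, fun h => ⟨⟨h.2.ne', h.1.1⟩, h.2, h.1.2⟩⟩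
    · exact ⟨fun h => ⟨⟨h.1.2, hlt _ _ (h.2.trans_le (hle _ _ hst))⟩, h.2⟩,
        fun h => ⟨⟨h.2.ne, h.1.1⟩, h.2⟩⟩
  rw [sum_congr rfl fun s hs => by rw [hrank s hs]]
  by_cases hloop : r t₀ t₀ ∧ t₀ ∈ S
  · have hU : U = insert t₀ L := by
      ext s
      simp only [U, L, mem_filter, mem_insert]
      constructor
      · intro h
        rcases (hle _ _ h.2).lt_or_eq with h' | h'
        exacts [Or.inr ⟨h.1, h'⟩, Or.inl h']
      · rintro (rfl | h)
        exacts [⟨hloop.2, hloop.1⟩, ⟨h.1, hlt _ _ h.2⟩]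
    rw [arcFactor, if_pos hloop, hU, sum_rank_insert_max p q ρ hL, sum_rank_eq_pqInt]
  · have hU : U = L := by
      ext s
      simp only [U, L, mem_filter]
      refine ⟨fun h => ⟨h.1, (hle _ _ h.2).lt_of_ne ?_⟩, fun h => ⟨h.1, hlt _ _ h.2⟩⟩
      rintro rfl
      exact hloop ⟨h.2, h.1⟩
    rw [arcFactor, if_neg hloop, hU, ← sum_rank_eq_pqInt]
    refine sum_congr rfl fun s hs => ?_
    rw [if_neg (hL s hs).ne, pow_zero, mul_one]

lemma arcFactor_erase_insert (hle : ∀ a b, r a b → a ≤ b) (p q ρ : R) {t₀ : α} (hs : s ∈ S)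
    (hst₀ : r s t₀) (ht₀T : t₀ ∉ T) (ht₀t : t₀ < t) :
    arcFactor r p q ρ (S.erase s) t (height (S.erase s) T t) =
      arcFactor r p q ρ S t (height S (insert t₀ T) t) := by
  have hslt : s < t := (hle _ _ hst₀).trans_lt ht₀t
  have hheight : height (S.erase s) T t = height S (insert t₀ T) t := by
    have hs' : s ∈ S.filter (· < t) := mem_filter.2 ⟨hs, hslt⟩
    have hpos := card_pos.2 ⟨s, hs'⟩
    rw [height, height, filter_erase, filter_insert, if_pos ht₀t, card_erase_of_mem hs',
      card_insert_of_notMem fun h => ht₀T (mem_filter.1 h).1]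
    omega
  simp only [arcFactor, hheight, mem_erase, hslt.ne', ne_eq, not_false_eq_true, true_and]

theorem sum_arcWeight_arcSystems (hlt : ∀ a b, a < b → r a b) (hle : ∀ a b, r a b → a ≤ b)
    (p q ρ : R) (hST : #S = #T) :
    ∑ M ∈ arcSystems r S T, arcWeight r p q ρ M =
      ∏ t ∈ T, arcFactor r p q ρ S t (height S T t) := by
  induction T using Finset.induction_on_min generalizing S with
  | empty =>
    rw [card_empty, card_eq_zero] at hST
    subst hST
    simp [arcSystems_empty, arcWeight, crossings, nestings, loops]
  | insert t₀ T ht₀ ih =>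
    have ht₀T : t₀ ∉ T := fun h => lt_irrefl t₀ (ht₀ t₀ h)
    have hrest : ∀ s ∈ S.filter (r · t₀), ∑ M ∈ arcSystems r (S.erase s) T, arcWeight r p q ρ M =
        ∏ t ∈ T, arcFactor r p q ρ S t (height S (insert t₀ T) t) := by
      intro s hs
      obtain ⟨hsS, hst₀⟩ := mem_filter.1 hs
      rw [ih (by rw [card_erase_of_mem hsS, hST, card_insert_of_notMem ht₀T, Nat.add_sub_cancel])]
      exact prod_congr rfl fun t ht =>
        arcFactor_erase_insert hle p q ρ hsS hst₀ ht₀T (ht₀ t ht)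
    have hheight : height S (insert t₀ T) t₀ = #(S.filter (· < t₀)) := by
      rw [height, filter_insert, if_neg (lt_irrefl t₀),
        filter_false_of_mem fun t ht => (ht₀ t ht).not_gt, card_empty, Nat.sub_zero]
    rw [sum_arcSystems_eq_sum_sum_filter_mem _ (mem_insert_self t₀ T), sum_congr rfl fun s hs => by
      rw [sum_filter_mem_arcSystems_insert p q ρ (mem_filter.1 hs).1 (mem_filter.1 hs).2 ht₀,
        hrest s hs], ← sum_mul, sum_filter_rel_eq_arcFactor hlt hle, prod_insert ht₀T, hheight]

end ArcSystems

section PermArcs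

variable {α : Type*} [Fintype α] [LinearOrder α]

def excSet (σ : Equiv.Perm α) : Finset α := univ.filter fun i => i < σ i

def excValSet (σ : Equiv.Perm α) : Finset α := univ.filter fun x => σ⁻¹ x < x

def upArcs (σ : Equiv.Perm α) : Finset (α × α) := univ.filter fun e => e.1 < e.2 ∧ σ e.1 = e.2

-- Lower arcs are stored reversed, as `(σ i, i)`, so that both halves are arc systems going up.
def lowArcs (σ : Equiv.Perm α) : Finset (α × α) := univ.filter fun e => e.1 ≤ e.2 ∧ σ e.2 = e.1

lemma isArcSystem_upArcs (σ : Equiv.Perm α) :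
    IsArcSystem (· < ·) (excSet σ) (excValSet σ) (upArcs σ) where
  image_fst := by ext i; simp [upArcs, excSet]
  image_snd := by
    ext x; simp only [upArcs, excValSet, mem_image, mem_filter, mem_univ, true_and]
    exact ⟨by rintro ⟨e, ⟨h, he⟩, rfl⟩; simpa [← he] using h,
      fun h => ⟨(σ⁻¹ x, x), ⟨h, by simp⟩, rfl⟩⟩
  injOn_fst e he e' he' h := by
    simp only [upArcs, coe_filter, mem_univ, true_and, Set.mem_ofPred_eq] at he he'
    exact Prod.ext h (he.2 ▸ he'.2 ▸ congrArg σ h)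
  injOn_snd e he e' he' h := by
    simp only [upArcs, coe_filter, mem_univ, true_and, Set.mem_ofPred_eq] at he he'
    exact Prod.ext (σ.injective (he.2.trans (h.trans he'.2.symm))) h
  rel e he := (mem_filter.1 he).2.1

lemma isArcSystem_lowArcs (σ : Equiv.Perm α) :
    IsArcSystem (· ≤ ·) (excValSet σ)ᶜ (excSet σ)ᶜ (lowArcs σ) where
  image_fst := by
    ext x; simp only [lowArcs, excValSet, mem_image, mem_filter, mem_univ, true_and, mem_compl,
      not_lt]
    exact ⟨by rintro ⟨e, ⟨h, he⟩, rfl⟩; simpa [← he] using h,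
      fun h => ⟨(x, σ⁻¹ x), ⟨h, by simp⟩, rfl⟩⟩
  image_snd := by
    ext i; simp only [lowArcs, excSet, mem_image, mem_filter, mem_univ, true_and, mem_compl,
      not_lt]
    exact ⟨by rintro ⟨e, ⟨h, he⟩, rfl⟩; simpa [he] using h, fun h => ⟨(σ i, i), ⟨h, rfl⟩, rfl⟩⟩
  injOn_fst e he e' he' h := by
    simp only [lowArcs, coe_filter, mem_univ, true_and, Set.mem_ofPred_eq] at he he'
    exact Prod.ext h (σ.injective (he.2.trans (h.trans he'.2.symm)))
  injOn_snd e he e' he' h := by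
    simp only [lowArcs, coe_filter, mem_univ, true_and, Set.mem_ofPred_eq] at he he'
    exact Prod.ext (he.2 ▸ he'.2 ▸ congrArg σ h) h
  rel e he := (mem_filter.1 he).2.1

end PermArcs

lemma cros_eq (σ : Equiv.Perm (Fin n)) :
    cros σ = crossings (· < ·) (upArcs σ) + crossings (· ≤ ·) (lowArcs σ) := by
  rw [cros, filter_or, card_union_of_disjoint (disjoint_filter.2 fun p _ h h' => h.1.not_gt h'.2.2)]
  congr 1
  · refine card_nbij' (fun p => ((p.2, σ p.2), (p.1, σ p.1))) (fun a => (a.2.1, a.1.1)) ?_ ?_ ?_ ?_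
      <;> intro p hp <;> grind [upArcs, crossings]
  · refine card_nbij' (fun p => ((σ p.1, p.1), (σ p.2, p.2))) (fun a => (a.1.2, a.2.2)) ?_ ?_ ?_ ?_
      <;> intro p hp <;> grind [lowArcs]

lemma nest_eq (σ : Equiv.Perm (Fin n)) :
    nest σ = nestings (upArcs σ) + nestings (lowArcs σ) := by
  rw [nest, filter_or, card_union_of_disjoint (disjoint_filter.2 fun p _ h h' => h.1.not_gt h'.2.2)]
  congr 1
  · refine card_nbij' (fun p => ((p.2, σ p.2), (p.1, σ p.1))) (fun a => (a.2.1, a.1.1)) ?_ ?_ ?_ ?_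
      <;> intro p hp <;> grind [upArcs, nestings]
  · refine card_nbij' (fun p => ((σ p.2, p.2), (σ p.1, p.1))) (fun a => (a.2.2, a.1.2)) ?_ ?_ ?_ ?_
      <;> intro p hp <;> grind [lowArcs, nestings]

lemma fixc_eq (σ : Equiv.Perm (Fin n)) : fixc σ = loops (lowArcs σ) := by
  refine card_nbij' (fun i => (i, i)) Prod.snd ?_ ?_ ?_ ?_ <;> intro i hi <;> grind [lowArcs]

lemma exc_eq (σ : Equiv.Perm (Fin n)) : exc σ = #(excSet σ) := rfl

lemma cpk_eq (σ : Equiv.Perm (Fin n)) : cpk σ = #(excValSet σ \ excSet σ) := by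
  rw [cpk, excValSet, excSet, ← filter_and_not]
  congr 1
  refine filter_congr fun x _ => and_congr_right fun h => ?_
  rw [not_lt]
  refine ⟨le_of_lt, fun h' => h'.lt_of_ne fun hx => h.ne ?_⟩
  rw [Equiv.Perm.inv_eq_iff_eq, hx]

section Fibers

variable {α : Type*} [Fintype α] [LinearOrder α]

lemma existsUnique_mem_or_swap_mem {r r' : α → α → Prop} {S T S' : Finset α}
    {M N : Finset (α × α)} (hM : IsArcSystem r S T M) (hN : IsArcSystem r' S' Sᶜ N) (x : α) :
    ∃! y, (x, y) ∈ M ∨ (y, x) ∈ N := by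
  by_cases hx : x ∈ S
  · obtain ⟨e, he, rfl⟩ := hM.exists_mem_fst_eq hx
    refine ⟨e.2, Or.inl he, fun y hy => ?_⟩
    rcases hy with hy | hy
    · exact (Prod.ext_iff.1 (hM.injOn_fst hy he rfl)).2
    · exact absurd hx (mem_compl.1 (hN.snd_mem hy))
  · obtain ⟨e, he, rfl⟩ := hN.exists_mem_snd_eq (mem_compl.2 hx)
    refine ⟨e.1, Or.inr he, fun y hy => ?_⟩
    rcases hy with hy | hy
    · exact absurd (hM.fst_mem hy) hx
    · exact (Prod.ext_iff.1 (hN.injOn_snd hy he rfl)).1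

lemma exists_perm_of_existsUnique {β : Type*} {rel : β → β → Prop}
    (h₁ : ∀ x, ∃! y, rel x y) (h₂ : ∀ y, ∃! x, rel x y) :
    ∃ σ : Equiv.Perm β, ∀ x y, rel x y ↔ σ x = y := by
  choose f hf hf' using h₁
  choose g hg hg' using h₂
  refine ⟨⟨f, g, fun x => (hg' _ x (hf x)).symm, fun y => (hf' _ y (hg y)).symm⟩,
    fun x y => ⟨fun h => (hf' x y h).symm, fun h => h ▸ hf x⟩⟩

lemma exists_perm_upArcs_lowArcs {A B : Finset α} {M N : Finset (α × α)}
    (hM : IsArcSystem (· < ·) A B M) (hN : IsArcSystem (· ≤ ·) Bᶜ Aᶜ N) :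
    ∃ σ : Equiv.Perm α, upArcs σ = M ∧ lowArcs σ = N := by
  obtain ⟨σ, hσ⟩ := exists_perm_of_existsUnique (existsUnique_mem_or_swap_mem hM hN)
    fun y => by
      simpa only [or_comm] using existsUnique_mem_or_swap_mem hN (by rwa [compl_compl]) y
  refine ⟨σ, ?_, ?_⟩ <;> ext e <;> simp only [upArcs, lowArcs, mem_filter, mem_univ, true_and]
  · rw [← hσ]
    refine ⟨fun h => h.2.resolve_right fun h' => (hN.rel _ h').not_gt h.1,
      fun h => ⟨hM.rel e h, Or.inl h⟩⟩
  · rw [← hσ]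
    refine ⟨fun h => h.2.resolve_left fun h' => (hM.rel _ h').not_ge h.1,
      fun h => ⟨hN.rel e h, Or.inr h⟩⟩

lemma sum_fiber_eq_mul {R : Type*} [CommSemiring R] (f g : Finset (α × α) → R) (A B : Finset α) :
    ∑ σ ∈ univ.filter (fun σ : Equiv.Perm α => excSet σ = A ∧ excValSet σ = B),
        f (upArcs σ) * g (lowArcs σ) =
      (∑ M ∈ arcSystems (· < ·) A B, f M) * ∑ N ∈ arcSystems (· ≤ ·) Bᶜ Aᶜ, g N := by
  rw [sum_mul_sum, ← sum_product']
  refine sum_nbij (fun σ => (upArcs σ, lowArcs σ)) ?_ ?_ ?_ fun _ _ => rfl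
  · intro σ hσ
    obtain ⟨rfl, rfl⟩ := (mem_filter.1 hσ).2
    exact mem_product.2 ⟨mem_arcSystems.2 (isArcSystem_upArcs σ),
      mem_arcSystems.2 (isArcSystem_lowArcs σ)⟩
  · intro σ _ τ _ h
    simp only [Prod.mk.injEq] at h
    refine Equiv.ext fun x => ?_
    by_cases hx : x < σ x
    · have : (x, σ x) ∈ upArcs τ := h.1 ▸ mem_filter.2 ⟨mem_univ _, hx, rfl⟩
      exact (mem_filter.1 this).2.2.symm
    · have : (σ x, x) ∈ lowArcs τ := h.2 ▸ mem_filter.2 ⟨mem_univ _, not_lt.1 hx, rfl⟩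
      exact (mem_filter.1 this).2.2.symm
  · intro MN hMN
    obtain ⟨hM, hN⟩ := mem_product.1 hMN
    rw [mem_arcSystems] at hM hN
    obtain ⟨σ, hup, hlow⟩ := exists_perm_upArcs_lowArcs hM hN
    refine ⟨σ, mem_filter.2 ⟨mem_univ _, ?_, ?_⟩, Prod.ext hup hlow⟩
    · rw [← (isArcSystem_upArcs σ).image_fst, hup, hM.image_fst]
    · rw [← (isArcSystem_upArcs σ).image_snd, hup, hM.image_snd]

end Fibers

section ExcPairWeight

variable {α : Type*} [Fintype α] [LinearOrder α] {R : Type*} [CommSemiring R]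

lemma height_compl (A B : Finset α) (t : α) : height Bᶜ Aᶜ t = height A B t := by
  have key (C : Finset α) :
      #(Cᶜ.filter (· < t)) + #(C.filter (· < t)) = #(univ.filter (· < t)) := by
    rw [← card_union_of_disjoint (disjoint_filter_filter disjoint_compl_left), ← filter_union,
      union_comm, union_compl]
  have hA := key A
  have hB := key B
  rw [height, height]
  omega

def excPairWeight (p q X Y ρ : R) (A B : Finset α) : R :=
  X ^ #A * Y ^ #(B \ A) * (∏ t ∈ B, pqInt p q (height A B t)) *
    ∏ t ∈ Aᶜ, if t ∈ B then pqInt p q (height A B t)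
      else ρ * p ^ height A B t + q * pqInt p q (height A B t)

end ExcPairWeight

lemma sum_perm_eq_sum_excPairWeight {R : Type*} [CommSemiring R] (p q X Y ρ : R) :
    ∑ σ : Equiv.Perm (Fin n), q ^ cros σ * p ^ nest σ * X ^ exc σ * Y ^ cpk σ * ρ ^ fixc σ =
      ∑ AB ∈ univ.filter (fun AB : Finset (Fin n) × Finset (Fin n) => #AB.1 = #AB.2),
        excPairWeight p q X Y ρ AB.1 AB.2 := by
  rw [← sum_fiberwise_of_maps_to (g := fun σ => (excSet σ, excValSet σ))
    (t := univ.filter fun AB : Finset (Fin n) × Finset (Fin n) => #AB.1 = #AB.2)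
    fun σ _ => mem_filter.2 ⟨mem_univ _, (isArcSystem_upArcs σ).card_eq⟩]
  refine sum_congr rfl fun ⟨A, B⟩ hAB => ?_
  have hcard : #A = #B := (mem_filter.1 hAB).2
  have hterm : ∀ σ ∈ univ.filter (fun σ : Equiv.Perm (Fin n) => (excSet σ, excValSet σ) = (A, B)),
      q ^ cros σ * p ^ nest σ * X ^ exc σ * Y ^ cpk σ * ρ ^ fixc σ =
        X ^ #A * Y ^ #(B \ A) *
          (arcWeight (· < ·) p q 1 (upArcs σ) * arcWeight (· ≤ ·) p q ρ (lowArcs σ)) := by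
    intro σ hσ
    obtain ⟨rfl, rfl⟩ := Prod.mk.inj (mem_filter.1 hσ).2
    rw [cros_eq, nest_eq, fixc_eq, cpk_eq, exc_eq, arcWeight, arcWeight, one_pow]
    ring
  rw [sum_congr rfl hterm, ← mul_sum]
  simp only [Prod.mk.injEq]
  rw [sum_fiber_eq_mul, sum_arcWeight_arcSystems (fun _ _ => id) (fun _ _ => le_of_lt) p q 1 hcard,
    sum_arcWeight_arcSystems (fun _ _ => le_of_lt) (fun _ _ => id) p q ρ
      (by rw [card_compl, card_compl, hcard]), excPairWeight]
  simp only [arcFactor, lt_irrefl, false_and, if_false, le_refl, true_and, mem_compl, height_compl,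
    ite_not]
  ring

lemma sum_card_eq_eq_sum_disjoint_sum_powerset {α R : Type*} [Fintype α] [DecidableEq α]
    [AddCommMonoid R] (F : Finset α × Finset α → R) :
    ∑ AB ∈ univ.filter (fun AB : Finset α × Finset α => #AB.1 = #AB.2), F AB =
      ∑ VP ∈ univ.filter (fun VP : Finset α × Finset α => Disjoint VP.1 VP.2 ∧ #VP.1 = #VP.2),
        ∑ T ∈ (VP.1 ∪ VP.2)ᶜ.powerset, F (VP.1 ∪ T, VP.2 ∪ T) := by
  rw [sum_sigma']
  refine sum_nbij' (fun AB => ⟨(AB.1 \ AB.2, AB.2 \ AB.1), AB.1 ∩ AB.2⟩)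
    (fun x => (x.1.1 ∪ x.2, x.1.2 ∪ x.2)) ?_ ?_ ?_ ?_ ?_
  · rintro ⟨A, B⟩ h
    simp only [mem_filter, mem_univ, true_and, mem_sigma, mem_powerset] at h ⊢
    refine ⟨⟨disjoint_sdiff_sdiff, ?_⟩, ?_⟩
    · have := card_sdiff_add_card_inter A B
      have := card_sdiff_add_card_inter B A
      rw [inter_comm] at this
      omega
    · intro x
      simp only [mem_inter, mem_compl, mem_union, mem_sdiff]
      tauto
  · rintro ⟨⟨V, P⟩, T⟩ h
    simp only [mem_filter, mem_univ, true_and, mem_sigma, mem_powerset,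
      subset_compl_iff_disjoint_left, disjoint_union_left] at h ⊢
    rw [card_union_of_disjoint h.2.1, card_union_of_disjoint h.2.2, h.1.2]
  · rintro ⟨A, B⟩ _
    simp only [sdiff_union_inter, Prod.mk.injEq, true_and]
    rw [inter_comm, sdiff_union_inter]
  · rintro ⟨⟨V, P⟩, T⟩ h
    simp only [mem_filter, mem_univ, true_and, mem_sigma, mem_powerset,
      subset_compl_iff_disjoint_left, disjoint_left] at h
    have e₁ : (V ∪ T) \ (P ∪ T) = V := by ext x; simp only [mem_sdiff, mem_union]; grind
    have e₂ : (P ∪ T) \ (V ∪ T) = P := by ext x; simp only [mem_sdiff, mem_union]; grind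
    have e₃ : (V ∪ T) ∩ (P ∪ T) = T := by ext x; simp only [mem_inter, mem_union]; grind
    rw [e₁, e₂, e₃]
  · rintro ⟨A, B⟩ _
    simp only [sdiff_union_inter]
    rw [inter_comm A, sdiff_union_inter]

section Motzkin

variable {α : Type*} [Fintype α] [LinearOrder α] {R : Type*} [CommSemiring R]

def motzkinWeight (p q X Y ρ : R) (V P : Finset α) : R :=
  X ^ #V * Y ^ #P * (∏ t ∈ P, pqInt p q (height V P t) ^ 2) *
    ∏ t ∈ (V ∪ P)ᶜ, (X * pqInt p q (height V P t) +
      (ρ * p ^ height V P t + q * pqInt p q (height V P t)))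

lemma excPairWeight_union_union (p q X Y ρ : R) {V P T : Finset α} (hVP : Disjoint V P)
    (hT : T ⊆ (V ∪ P)ᶜ) :
    excPairWeight p q X Y ρ (V ∪ T) (P ∪ T) =
      X ^ #V * Y ^ #P * (∏ t ∈ P, pqInt p q (height V P t) ^ 2) *
        ((∏ t ∈ T, X * pqInt p q (height V P t)) *
          ∏ t ∈ (V ∪ P)ᶜ \ T, (ρ * p ^ height V P t + q * pqInt p q (height V P t))) := by
  rw [subset_compl_iff_disjoint_left, disjoint_union_left] at hT
  obtain ⟨hVT, hPT⟩ := hT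
  have hsdiff : (P ∪ T) \ (V ∪ T) = P := by
    ext x
    have := disjoint_left.1 hVP
    have := disjoint_left.1 hPT
    simp only [mem_sdiff, mem_union]
    grind
  have hcompl : (V ∪ T)ᶜ = P ∪ (V ∪ P)ᶜ \ T := by
    ext x
    have := disjoint_left.1 hVP
    have := disjoint_left.1 hPT
    simp only [mem_compl, mem_union, mem_sdiff]
    grind
  have hdisj : Disjoint P ((V ∪ P)ᶜ \ T) :=
    disjoint_left.2 fun x hx h => (mem_compl.1 (mem_sdiff.1 h).1) (mem_union_right V hx)
  rw [excPairWeight, hsdiff, hcompl, prod_union hPT, prod_union hdisj, card_union_of_disjoint hVT]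
  simp only [height_union_union hVT hPT, mem_union]
  rw [prod_congr rfl fun t ht => if_pos (Or.inl ht),
    prod_congr rfl fun t ht => if_neg (by grind [mem_compl]),
    prod_mul_distrib, prod_const, prod_pow]
  ring

lemma sum_powerset_excPairWeight (p q X Y ρ : R) {V P : Finset α} (hVP : Disjoint V P) :
    ∑ T ∈ (V ∪ P)ᶜ.powerset, excPairWeight p q X Y ρ (V ∪ T) (P ∪ T) =
      motzkinWeight p q X Y ρ V P := by
  rw [motzkinWeight, prod_add, mul_sum]
  exact sum_congr rfl fun T hT => excPairWeight_union_union p q X Y ρ hVP (mem_powerset.1 hT)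

lemma motzkinWeight_scale (p q : R) {c X Y ρ X' Y' ρ' : R} (hXY : c * X' * (c * Y') = X * Y)
    (hX : c * X' + c * q = X + q) (hρ : c * ρ' = ρ) {V P : Finset α} (hVP : Disjoint V P)
    (hcard : #V = #P) :
    c ^ Fintype.card α * motzkinWeight p q X' Y' ρ' V P = motzkinWeight p q X Y ρ V P := by
  have hsplit : Fintype.card α = #V + #P + #(V ∪ P)ᶜ := by
    rw [card_compl, card_union_of_disjoint hVP]
    have := card_le_univ (V ∪ P)
    rw [card_union_of_disjoint hVP] at this
    omega
  have hpaired : c ^ #V * c ^ #P * (X' ^ #V * Y' ^ #P) = X ^ #V * Y ^ #P :=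
    calc c ^ #V * c ^ #P * (X' ^ #V * Y' ^ #P) = (c * X' * (c * Y')) ^ #V := by
          rw [← hcard]; ring
      _ = X ^ #V * Y ^ #P := by rw [hXY, mul_pow, hcard]
  have hlevel : ∀ k : ℕ, c * (X' * pqInt p q k + (ρ' * p ^ k + q * pqInt p q k)) =
      X * pqInt p q k + (ρ * p ^ k + q * pqInt p q k) := fun k =>
    calc _ = (c * X' + c * q) * pqInt p q k + c * ρ' * p ^ k := by ring
      _ = _ := by rw [hX, hρ]; ring
  rw [motzkinWeight, motzkinWeight, hsplit, pow_add, pow_add, ← hpaired,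
    ← prod_congr rfl fun t _ => hlevel (height V P t), prod_mul_distrib, prod_const]
  ring

end Motzkin

theorem sum_perm_eq_sum_motzkinWeight {R : Type*} [CommSemiring R] (p q X Y ρ : R) :
    ∑ σ : Equiv.Perm (Fin n), q ^ cros σ * p ^ nest σ * X ^ exc σ * Y ^ cpk σ * ρ ^ fixc σ =
      ∑ VP ∈ univ.filter (fun VP : Finset (Fin n) × Finset (Fin n) =>
          Disjoint VP.1 VP.2 ∧ #VP.1 = #VP.2),
        motzkinWeight p q X Y ρ VP.1 VP.2 := by
  rw [sum_perm_eq_sum_excPairWeight, sum_card_eq_eq_sum_disjoint_sum_powerset]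
  exact sum_congr rfl fun VP hVP => sum_powerset_excPairWeight p q X Y ρ (mem_filter.1 hVP).2.1

theorem sum_perm_rescale {R : Type*} [CommSemiring R] (p q : R) {c X Y ρ X' Y' ρ' : R}
    (hXY : c * X' * (c * Y') = X * Y) (hX : c * X' + c * q = X + q) (hρ : c * ρ' = ρ) :
    c ^ n * ∑ σ : Equiv.Perm (Fin n),
        q ^ cros σ * p ^ nest σ * X' ^ exc σ * Y' ^ cpk σ * ρ' ^ fixc σ =
      ∑ σ : Equiv.Perm (Fin n), q ^ cros σ * p ^ nest σ * X ^ exc σ * Y ^ cpk σ * ρ ^ fixc σ := by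
  rw [sum_perm_eq_sum_motzkinWeight, sum_perm_eq_sum_motzkinWeight, mul_sum]
  refine sum_congr rfl fun VP hVP => ?_
  obtain ⟨hdisj, hcard⟩ := (mem_filter.1 hVP).2
  rw [← motzkinWeight_scale p q hXY hX hρ hdisj hcard, Fintype.card_fin]

theorem stmt9_general (n : ℕ) (p q r x t : ℝ) (h : (1 + x) * (x + t) * (1 + x * t) ≠ 0) :
    ∑ σ : Equiv.Perm (Fin n),
        p ^ nest σ * q ^ cros σ * (t * q) ^ exc σ * r ^ fixc σ =
      ((1 + x * t) / (1 + x)) ^ n *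
        ∑ σ : Equiv.Perm (Fin n),
          p ^ nest σ * q ^ cros σ * ((1 + x) ^ 2 * t / ((x + t) * (1 + x * t))) ^ cpk σ *
            (q * (x + t) / (1 + x * t)) ^ exc σ *
            ((1 + x) * r / (1 + x * t)) ^ fixc σ := by
  obtain ⟨⟨h₁, h₂⟩, h₃⟩ : ((1 + x ≠ 0) ∧ x + t ≠ 0) ∧ 1 + x * t ≠ 0 := by
    simpa only [mul_ne_zero_iff] using h
  have key := sum_perm_rescale (n := n) p q (c := (1 + x * t) / (1 + x)) (X := t * q) (Y := 1)
    (ρ := r) (X' := q * (x + t) / (1 + x * t)) (Y' := (1 + x) ^ 2 * t / ((x + t) * (1 + x * t)))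
    (ρ' := (1 + x) * r / (1 + x * t)) (by field_simp) (by field_simp; ring) (by field_simp)
  convert key.symm using 1
  · exact sum_congr rfl fun σ _ => by ring
  · exact congrArg _ (sum_congr rfl fun σ _ => by ring)

theorem stmt9 (n : ℕ) (hn : 1 ≤ n) (p q r x t : ℝ) (h : (1 + x) * (x + t) * (1 + x * t) ≠ 0) :
    ∑ σ : Equiv.Perm (Fin n),
        p ^ nest σ * q ^ cros σ * (t * q) ^ exc σ * r ^ fixc σ =
      ((1 + x * t) / (1 + x)) ^ n *
        ∑ σ : Equiv.Perm (Fin n),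
          p ^ nest σ * q ^ cros σ * ((1 + x) ^ 2 * t / ((x + t) * (1 + x * t))) ^ cpk σ *
            (q * (x + t) / (1 + x * t)) ^ exc σ *
            ((1 + x) * r / (1 + x * t)) ^ fixc σ :=
  stmt9_general n p q r x t h

end EulerExc
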